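/- Data-free upper bound: Let X ∈ ℝ^{N×d} have rank r_d, largest singular value σ₁(X), and right singular vectors V_d ∈ ℝ^{d×r_d}. Let V̂ ∈ ℝ^{d×r_v} have orthonormal columns (r_v ≥ r_d) and suppose 1 − (1/r_d)‖V̂ᵀV_d‖_F² ≤ ζ². Then for any matrices ρ, τ ∈ ℝ^{m×d}: ‖(ρ − τ)Xᵀ‖_F² ≤ 2σ₁(X)² ( ‖(ρ − τ)V̂‖_F² + r_d ζ² ‖ρ − τ‖₂² ). -/

import Mathlib

/-! Split `Xᵀ = P Xᵀ + (1 - P) Xᵀ` with `P = V̂ V̂ᵀ`. The first piece factors through `V̂`,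
the second through `(1 - P) V_d` because `X = X V_d V_dᵀ`. Orthonormal factors do not increase
the operator norm, and `‖(1 - P) V_d‖_F² = r_d - ‖V̂ᵀ V_d‖_F² ≤ r_d ζ²`. -/

open Matrix

/-- Squared Frobenius norm of a real matrix. -/
noncomputable def frobSq {m n : ℕ} (A : Matrix (Fin m) (Fin n) ℝ) : ℝ :=
  ∑ i, ∑ j, (A i j)^2

/-- Frobenius norm of a real matrix. -/
noncomputable def frob {m n : ℕ} (A : Matrix (Fin m) (Fin n) ℝ) : ℝ :=
  Real.sqrt (frobSq A)

/-- Operator (spectral) norm of a real matrix, as the norm of the induced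
linear map between Euclidean spaces. -/
noncomputable def opNorm {m n : ℕ} (A : Matrix (Fin m) (Fin n) ℝ) : ℝ :=
  ‖LinearMap.toContinuousLinearMap (Matrix.toEuclideanLin A)‖

/-- The `j`-th largest singular value of a real matrix (`j` zero-indexed):
the square roots of the eigenvalues of `Aᴴ * A`, sorted in decreasing order. -/
noncomputable def singularValue {m n : ℕ} (A : Matrix (Fin m) (Fin n) ℝ) (j : Fin n) : ℝ :=
  let μ : Fin n → ℝ := fun i =>
    Real.sqrt ((Matrix.isHermitian_conjTranspose_mul_self A).eigenvalues i)
  μ (Tuple.sort μ j.rev)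


open scoped Matrix.Norms.L2Operator

section
variable {m n p : ℕ}

lemma opNorm_eq_l2_opNorm (A : Matrix (Fin m) (Fin n) ℝ) : opNorm A = ‖A‖ := rfl

lemma opNorm_transpose (A : Matrix (Fin m) (Fin n) ℝ) : opNorm Aᵀ = opNorm A := by
  simpa only [opNorm_eq_l2_opNorm, conjTranspose_eq_transpose_of_trivial]
    using l2_opNorm_conjTranspose A

lemma opNorm_le_one_of_transpose_mul_self {V : Matrix (Fin n) (Fin p) ℝ} (hV : Vᵀ * V = 1) :
    opNorm V ≤ 1 := by
  have hsq : opNorm V * opNorm V = ‖(1 : Matrix (Fin p) (Fin p) ℝ)‖ := by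
    rw [opNorm_eq_l2_opNorm, ← l2_opNorm_conjTranspose_mul_self,
      conjTranspose_eq_transpose_of_trivial, hV]
  have hone := l2_opNorm_conjTranspose_mul_self (1 : Matrix (Fin p) (Fin p) ℝ)
  rw [conjTranspose_one, one_mul] at hone
  have hone_le : ‖(1 : Matrix (Fin p) (Fin p) ℝ)‖ ≤ 1 := by
    nlinarith [norm_nonneg (1 : Matrix (Fin p) (Fin p) ℝ)]
  nlinarith [norm_nonneg V]

lemma opNorm_transpose_mul_le {V : Matrix (Fin n) (Fin p) ℝ} (hV : Vᵀ * V = 1)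
    (A : Matrix (Fin n) (Fin m) ℝ) : opNorm (Vᵀ * A) ≤ opNorm A :=
  calc opNorm (Vᵀ * A) ≤ opNorm Vᵀ * opNorm A := l2_opNorm_mul _ _
    _ ≤ opNorm A := by
      rw [opNorm_transpose]
      exact mul_le_of_le_one_left (norm_nonneg _) (opNorm_le_one_of_transpose_mul_self hV)

lemma frobSq_nonneg (A : Matrix (Fin m) (Fin n) ℝ) : 0 ≤ frobSq A := by
  unfold frobSq; positivity

lemma frobSq_transpose (A : Matrix (Fin m) (Fin n) ℝ) : frobSq Aᵀ = frobSq A :=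
  Finset.sum_comm

lemma frobSq_eq_trace (A : Matrix (Fin m) (Fin n) ℝ) : frobSq A = trace (Aᵀ * A) := by
  rw [frobSq, trace, Finset.sum_comm]
  simp [mul_apply, sq]

lemma frobSq_add_le (A B : Matrix (Fin m) (Fin n) ℝ) :
    frobSq (A + B) ≤ 2 * frobSq A + 2 * frobSq B := by
  simp only [frobSq, Finset.mul_sum, ← Finset.sum_add_distrib, Matrix.add_apply]
  gcongr with i _ j _
  nlinarith [sq_nonneg (A i j - B i j)]

lemma sum_sq_mulVec_le (A : Matrix (Fin m) (Fin n) ℝ) (v : Fin n → ℝ) :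
    ∑ i, (A *ᵥ v) i ^ 2 ≤ opNorm A ^ 2 * ∑ j, v j ^ 2 := by
  have h := pow_le_pow_left₀ (norm_nonneg _) (l2_opNorm_mulVec A (WithLp.toLp 2 v)) 2
  rw [opNorm_eq_l2_opNorm]
  simpa [mul_pow, EuclideanSpace.real_norm_sq_eq] using h

lemma frobSq_mul_le_opNorm_sq_mul (A : Matrix (Fin m) (Fin n) ℝ)
    (B : Matrix (Fin n) (Fin p) ℝ) :
    frobSq (A * B) ≤ opNorm A ^ 2 * frobSq B := by
  rw [frobSq, frobSq, Finset.sum_comm, Finset.sum_comm (f := fun i j => B i j ^ 2),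
    Finset.mul_sum]
  gcongr with j _
  exact sum_sq_mulVec_le A (fun i => B i j)

lemma frobSq_mul_le_mul_opNorm_sq (A : Matrix (Fin m) (Fin n) ℝ)
    (B : Matrix (Fin n) (Fin p) ℝ) :
    frobSq (A * B) ≤ frobSq A * opNorm B ^ 2 := by
  rw [← frobSq_transpose, transpose_mul, ← frobSq_transpose A, ← opNorm_transpose B, mul_comm]
  exact frobSq_mul_le_opNorm_sq_mul _ _

end

section
variable {d r s : ℕ}

lemma frobSq_orthogonal_complement_mul {V : Matrix (Fin d) (Fin r) ℝ}
    {W : Matrix (Fin d) (Fin s) ℝ} (hV : Vᵀ * V = 1) (hW : Wᵀ * W = 1) :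
    frobSq ((1 - W * Wᵀ) * V) = r - frobSq (Wᵀ * V) := by
  have hQ : (1 - W * Wᵀ)ᵀ * (1 - W * Wᵀ) = 1 - W * Wᵀ := by
    have hP : W * Wᵀ * (W * Wᵀ) = W * Wᵀ := by
      rw [Matrix.mul_assoc, ← Matrix.mul_assoc Wᵀ, hW, Matrix.one_mul]
    simp only [transpose_sub, transpose_one, transpose_mul, transpose_transpose, Matrix.sub_mul,
      Matrix.mul_sub, Matrix.one_mul, Matrix.mul_one, hP, sub_self, sub_zero]
  have hgram : ((1 - W * Wᵀ) * V)ᵀ * ((1 - W * Wᵀ) * V) = 1 - (Wᵀ * V)ᵀ * (Wᵀ * V) := by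
    rw [transpose_mul, Matrix.mul_assoc, ← Matrix.mul_assoc _ _ V, hQ, Matrix.sub_mul,
      Matrix.one_mul, Matrix.mul_sub, hV, transpose_mul, transpose_transpose]
    simp only [Matrix.mul_assoc]
  rw [frobSq_eq_trace, hgram, trace_sub, trace_one, ← frobSq_eq_trace, Fintype.card_fin]

lemma frobSq_orthogonal_complement_mul_le {V : Matrix (Fin d) (Fin r) ℝ}
    {W : Matrix (Fin d) (Fin s) ℝ} (hV : Vᵀ * V = 1) (hW : Wᵀ * W = 1) {ζ : ℝ}
    (hζ : 1 - (1 / (r : ℝ)) * frobSq (Wᵀ * V) ≤ ζ ^ 2) :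
    frobSq ((1 - W * Wᵀ) * V) ≤ r * ζ ^ 2 := by
  rw [frobSq_orthogonal_complement_mul hV hW]
  rcases Nat.eq_zero_or_pos r with rfl | hr
  · simp [frobSq]
  · have hr' : (0 : ℝ) < r := Nat.cast_pos.mpr hr
    calc (r : ℝ) - frobSq (Wᵀ * V) = r * (1 - (1 / (r : ℝ)) * frobSq (Wᵀ * V)) := by
          field_simp
      _ ≤ r * ζ ^ 2 := by gcongr

end

lemma frobSq_mul_transpose_mul_le {m n d p : ℕ} {V : Matrix (Fin d) (Fin p) ℝ}
    (hV : Vᵀ * V = 1)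
    (A : Matrix (Fin m) (Fin p) ℝ) (B : Matrix (Fin d) (Fin n) ℝ) :
    frobSq (A * (Vᵀ * B)) ≤ frobSq A * opNorm B ^ 2 := by
  refine (frobSq_mul_le_mul_opNorm_sq _ _).trans ?_
  gcongr
  · exact frobSq_nonneg A
  · exact norm_nonneg _
  · exact opNorm_transpose_mul_le hV B

lemma mul_transpose_eq_proj_add_residual {m N d r s : ℕ} {X : Matrix (Fin N) (Fin d) ℝ}
    {V : Matrix (Fin d) (Fin r) ℝ} (hXV : X * (V * Vᵀ) = X) (W : Matrix (Fin d) (Fin s) ℝ)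
    (A : Matrix (Fin m) (Fin d) ℝ) :
    A * Xᵀ = A * W * (Wᵀ * Xᵀ) + A * ((1 - W * Wᵀ) * V) * (Vᵀ * Xᵀ) := by
  have hXt : V * (Vᵀ * Xᵀ) = Xᵀ := by
    simpa [transpose_mul, Matrix.mul_assoc] using congrArg transpose hXV
  simp only [Matrix.mul_assoc, hXt, Matrix.sub_mul, Matrix.mul_sub, Matrix.one_mul]
  abel

theorem data_free_upper_bound_general {N d rd rv m : ℕ}
    (X : Matrix (Fin N) (Fin d) ℝ) (Vd : Matrix (Fin d) (Fin rd) ℝ)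
    (Vh : Matrix (Fin d) (Fin rv) ℝ) (ζ : ℝ)
    (hVd : Vdᵀ * Vd = 1) (hXVd : X * (Vd * Vdᵀ) = X)
    (hVh : Vhᵀ * Vh = 1)
    (hζ : 1 - (1 / (rd : ℝ)) * frobSq (Vhᵀ * Vd) ≤ ζ^2)
    (ρ τ : Matrix (Fin m) (Fin d) ℝ) :
    frobSq ((ρ - τ) * Xᵀ)
      ≤ 2 * (opNorm X)^2
          * (frobSq ((ρ - τ) * Vh) + (rd : ℝ) * ζ^2 * (opNorm (ρ - τ))^2) := by
  set Δ := ρ - τ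
  have hproj : frobSq (Δ * Vh * (Vhᵀ * Xᵀ)) ≤ frobSq (Δ * Vh) * opNorm X ^ 2 := by
    simpa only [opNorm_transpose] using frobSq_mul_transpose_mul_le hVh (Δ * Vh) Xᵀ
  have hresid : frobSq (Δ * ((1 - Vh * Vhᵀ) * Vd) * (Vdᵀ * Xᵀ))
      ≤ opNorm Δ ^ 2 * (rd * ζ ^ 2) * opNorm X ^ 2 := by
    refine (frobSq_mul_transpose_mul_le hVd _ Xᵀ).trans ?_
    rw [opNorm_transpose]
    gcongr
    refine (frobSq_mul_le_opNorm_sq_mul _ _).trans ?_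
    gcongr
    exact frobSq_orthogonal_complement_mul_le hVd hVh hζ
  calc frobSq (Δ * Xᵀ)
      ≤ 2 * frobSq (Δ * Vh * (Vhᵀ * Xᵀ))
          + 2 * frobSq (Δ * ((1 - Vh * Vhᵀ) * Vd) * (Vdᵀ * Xᵀ)) := by
        rw [mul_transpose_eq_proj_add_residual hXVd Vh Δ]
        exact frobSq_add_le _ _
    _ ≤ 2 * (frobSq (Δ * Vh) * opNorm X ^ 2)
          + 2 * (opNorm Δ ^ 2 * (rd * ζ ^ 2) * opNorm X ^ 2) := by
        gcongr
    _ = 2 * opNorm X ^ 2 * (frobSq (Δ * Vh) + rd * ζ ^ 2 * opNorm Δ ^ 2) := by ring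

/-- Data-free upper bound: if X has rank r_d with orthonormal right singular vectors V_d
spanning its row space, V̂ has orthonormal columns with r_v ≥ r_d, and
1 − (1/r_d)‖V̂ᵀV_d‖_F² ≤ ζ², then for any ρ, τ:
‖(ρ − τ)Xᵀ‖_F² ≤ 2σ₁(X)²(‖(ρ − τ)V̂‖_F² + r_d ζ² ‖ρ − τ‖₂²). -/
theorem data_free_upper_bound {N d rd rv m : ℕ}
    (X : Matrix (Fin N) (Fin d) ℝ) (Vd : Matrix (Fin d) (Fin rd) ℝ)
    (Vh : Matrix (Fin d) (Fin rv) ℝ) (ζ : ℝ)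
    (hrank : X.rank = rd) (hVd : Vdᵀ * Vd = 1) (hXVd : X * (Vd * Vdᵀ) = X)
    (hVh : Vhᵀ * Vh = 1) (hr : rd ≤ rv)
    (hζ : 1 - (1 / (rd : ℝ)) * frobSq (Vhᵀ * Vd) ≤ ζ^2)
    (ρ τ : Matrix (Fin m) (Fin d) ℝ) :
    frobSq ((ρ - τ) * Xᵀ)
      ≤ 2 * (opNorm X)^2
          * (frobSq ((ρ - τ) * Vh) + (rd : ℝ) * ζ^2 * (opNorm (ρ - τ))^2) :=
  data_free_upper_bound_general X Vd Vh ζ hVd hXVd hVh hζ ρ τ
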